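/- arXiv:2304.02685 — 2 statements merged into one kernel-verified Lean document; each statement's English description precedes it below -/
import Mathlib

section
/- Let A be a normal element (A A* = A* A) of a unital C*-algebra 𝔄. Then for every λ ∈ ℂ, λ belongs to the spectrum of A (i.e., A − λ·1 is not invertible in 𝔄) if and only if there exists a state ω on 𝔄 that is an eigenstate of A with eigenvalue λ. -/
/-!
If `A - l` is invertible, an eigenstate `ω` would give `1 = ω (u⁻¹ (A - l)) = 0`. Conversely, if
`N = A - l` is normal and not invertible, `0` lies in its spectrum, so some character `φ` of the
commutative C⋆-algebra generated by `N` vanishes at `N`. A norm-preserving Hahn–Banach extension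
of `φ` is a functional `g` of norm `≤ 1` with `g 1 = 1`, and such functionals are positive. Then
`g (N⋆ N) = |φ N|² = 0`, and the Cauchy–Schwarz inequality for the positive functional `g` gives
`g (B N) = 0` for every `B`, which is the eigenstate equation.
-/

variable {𝔄 : Type*} [CStarAlgebra 𝔄]

/-- A state on a unital C*-algebra `𝔄`: a continuous linear functional `ω : 𝔄 → ℂ`
which is normalized (`ω 1 = 1`) and positive (`ω (a* a)` is a nonnegative real number). -/
def IsState (ω : 𝔄 → ℂ) : Prop :=
  Continuous ω ∧ IsLinearMap ℂ ω ∧ ω 1 = 1 ∧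
    ∀ a : 𝔄, ∃ r : ℝ, 0 ≤ r ∧ ω (star a * a) = (r : ℂ)

/-- `ω` is an eigenstate of `A` with eigenvalue `l` if `ω (B * A) = l * ω B` for all `B`. -/
def IsEigenstate (ω : 𝔄 → ℂ) (A : 𝔄) (l : ℂ) : Prop :=
  ∀ B : 𝔄, ω (B * A) = l * ω B

open StarAlgebra Complex ComplexOrder

lemma IsSelfAdjoint.norm_add_I_smul_one_sq_le {a : 𝔄} (ha : IsSelfAdjoint a) (t : ℝ) :
    ‖a + (t * I) • (1 : 𝔄)‖ ^ 2 ≤ ‖a‖ ^ 2 + t ^ 2 := by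
  rcases subsingleton_or_nontrivial 𝔄 with _ | _
  · simp [Subsingleton.elim _ (0 : 𝔄)]
    positivity
  have hstar : star (a + (t * I) • (1 : 𝔄)) * (a + (t * I) • 1) = a * a + (t ^ 2 : ℂ) • 1 := by
    have hc : star (t * I : ℂ) = -(t * I) := by simp
    rw [star_add, star_smul, ha.star_eq, star_one, hc]
    simp only [add_mul, mul_add, smul_mul_assoc, mul_smul_comm, mul_one, one_mul]
    match_scalars <;> simp [← sq, mul_pow]
  calc ‖a + (t * I) • (1 : 𝔄)‖ ^ 2 = ‖a * a + (t ^ 2 : ℂ) • (1 : 𝔄)‖ := by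
        rw [sq, ← CStarRing.norm_star_mul_self, hstar]
    _ ≤ ‖a * a‖ + ‖(t ^ 2 : ℂ) • (1 : 𝔄)‖ := norm_add_le _ _
    _ ≤ ‖a‖ ^ 2 + t ^ 2 := by
        gcongr
        · exact sq ‖a‖ ▸ norm_mul_le a a
        · simp [norm_smul]

namespace ContinuousLinearMap

variable (g : 𝔄 →L[ℂ] ℂ) (hg : ‖g‖ ≤ 1) (hg1 : g 1 = 1)
include hg hg1

lemma im_apply_eq_zero_of_isSelfAdjoint {a : 𝔄} (ha : IsSelfAdjoint a) : (g a).im = 0 := by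
  have hbound (t : ℝ) : 2 * (g a).im * t ≤ ‖a‖ ^ 2 := by
    have hga : g (a + (t * I) • 1) = g a + t * I := by simp [hg1]
    have : ‖g a + t * I‖ ^ 2 ≤ ‖a‖ ^ 2 + t ^ 2 := by
      refine le_trans ?_ (ha.norm_add_I_smul_one_sq_le t)
      rw [← hga]
      gcongr
      exact g.le_of_opNorm_le hg _ |>.trans_eq (one_mul _)
    rw [Complex.sq_norm, normSq_apply] at this
    simp only [add_re, mul_re, ofReal_re, I_re, mul_zero, ofReal_im, I_im, mul_one, sub_self,
      add_zero, add_im, mul_im] at this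
    nlinarith [sq_nonneg (g a).re, sq_nonneg (g a).im]
  by_contra him
  have := hbound ((‖a‖ ^ 2 + 1) / (2 * (g a).im))
  rw [mul_div_cancel₀ _ (by simpa using him)] at this
  linarith

lemma apply_nonneg_of_norm_le_one [PartialOrder 𝔄] [StarOrderedRing 𝔄] {a : 𝔄} (ha : 0 ≤ a) :
    0 ≤ g a := by
  set b := algebraMap ℝ 𝔄 ‖a‖ - a
  have hb : ‖b‖ ≤ ‖a‖ :=
    (CStarAlgebra.norm_le_iff_le_algebraMap b (norm_nonneg a)
      (sub_nonneg.2 (IsSelfAdjoint.of_nonneg ha).le_algebraMap_norm_self)).2 (sub_le_self _ ha)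
  have hgb : g b = ‖a‖ - g a := by
    simp [b, Algebra.algebraMap_eq_smul_one, hg1]
  have hre : (g b).re ≤ ‖a‖ :=
    (re_le_norm _).trans <| (g.le_of_opNorm_le hg b).trans <| (one_mul ‖b‖).symm ▸ hb
  have him := g.im_apply_eq_zero_of_isSelfAdjoint hg hg1 (.of_nonneg ha)
  exact Complex.nonneg_iff.2 ⟨by simpa [hgb] using hre, him.symm⟩

end ContinuousLinearMap

lemma IsStarNormal.exists_norm_le_one_map_one_map_star_mul_self_eq_zero (N : 𝔄) [IsStarNormal N]
    (hN : ¬ IsUnit N) : ∃ g : 𝔄 →L[ℂ] ℂ, ‖g‖ ≤ 1 ∧ g 1 = 1 ∧ g (star N * N) = 0 := by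
  have : Nontrivial 𝔄 := not_subsingleton_iff_nontrivial.1 fun _ => hN (isUnit_of_subsingleton N)
  obtain ⟨φ, hφ⟩ := (elemental.bijective_characterSpaceToSpectrum N).2
    ⟨0, spectrum.zero_mem_iff ℂ |>.2 hN⟩
  let φ' : elemental ℂ N →L[ℂ] ℂ := φ.1
  obtain ⟨g, hg, hgn⟩ := exists_extension_norm_eq (elemental ℂ N).toSubalgebra.toSubmodule φ'
  have hext (x : elemental ℂ N) : g x = φ x := hg x
  have hφ' : ‖φ'‖ ≤ 1 :=
    ContinuousLinearMap.opNorm_le_bound _ zero_le_one fun x =>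
      (one_mul ‖x‖).symm ▸ AlgHom.norm_apply_le_self φ x
  set n : elemental ℂ N := ⟨N, elemental.self_mem ℂ N⟩
  have hφN : φ n = 0 := congr(Subtype.val $hφ)
  refine ⟨g, hgn ▸ hφ', by simpa using hext 1, ?_⟩
  simpa [hφN] using hext (star n * n)

namespace PositiveLinearMap

lemma apply_mul_eq_zero_of_apply_star_mul_self_eq_zero {A : Type*} [NonUnitalCStarAlgebra A]
    [PartialOrder A] [StarOrderedRing A] (f : A →ₚ[ℂ] ℂ) {n : A} (hn : f (star n * n) = 0)
    (b : A) : f (b * n) = 0 := by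
  have hnorm : ‖f.toPreGNS n‖ = 0 := by simp [preGNS_norm_def, hn]
  have := norm_inner_le_norm (𝕜 := ℂ) (f.toPreGNS (star b)) (f.toPreGNS n)
  rw [hnorm, mul_zero, norm_le_zero_iff, preGNS_inner_def] at this
  simpa using this

lemma isState [PartialOrder 𝔄] [StarOrderedRing 𝔄] (f : 𝔄 →ₚ[ℂ] ℂ) (hf1 : f 1 = 1) :
    IsState f := by
  refine ⟨map_continuous f, f.toLinearMap.isLinear, hf1, fun a => ?_⟩
  obtain ⟨hre, him⟩ := Complex.nonneg_iff.1 (f.map_nonneg (star_mul_self_nonneg a))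
  exact ⟨_, hre, Complex.ext rfl him.symm⟩

end PositiveLinearMap

lemma isEigenstate_iff_forall_apply_mul_sub_eq_zero {ω : 𝔄 → ℂ} (hω : IsLinearMap ℂ ω) (A : 𝔄)
    (l : ℂ) : IsEigenstate ω A l ↔ ∀ B, ω (B * (A - l • 1)) = 0 := by
  refine forall_congr' fun B => ?_
  rw [mul_sub, mul_smul_comm, mul_one, hω.map_sub, hω.map_smul, smul_eq_mul, sub_eq_zero]

/-- For a normal element `A`, a complex number `l` is in the spectrum of `A`
(i.e. `A - l•1` is not invertible) iff there exists an eigenstate of `A`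
with eigenvalue `l`. -/
theorem spectrum_eq_eigenvalues_of_normal (A : 𝔄) (hA : A * star A = star A * A) (l : ℂ) :
    ¬ IsUnit (A - l • (1 : 𝔄)) ↔ ∃ ω : 𝔄 → ℂ, IsState ω ∧ IsEigenstate ω A l := by
  constructor
  · intro hN
    -- `𝔄` carries no order instance; positivity of functionals refers to the spectral order.
    let := CStarAlgebra.spectralOrder 𝔄
    have := CStarAlgebra.spectralOrderedRing 𝔄
    have : IsStarNormal A := ⟨hA.symm⟩
    have : IsStarNormal (A - l • 1) := Commute.isStarNormal_sub <| by
      rw [star_smul, star_one]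
      exact (Commute.one_right A).smul_right _
    obtain ⟨g, hg, hg1, hgN⟩ :=
      IsStarNormal.exists_norm_le_one_map_one_map_star_mul_self_eq_zero _ hN
    let f := PositiveLinearMap.mk₀ g.toLinearMap fun _ => g.apply_nonneg_of_norm_le_one hg hg1
    exact ⟨f, f.isState hg1, (isEigenstate_iff_forall_apply_mul_sub_eq_zero
      f.toLinearMap.isLinear A l).2 (f.apply_mul_eq_zero_of_apply_star_mul_self_eq_zero hgN)⟩
  · rintro ⟨ω, ⟨-, hω, hω1, -⟩, heig⟩ ⟨u, hu⟩
    have := (isEigenstate_iff_forall_apply_mul_sub_eq_zero hω A l).1 heig ↑u⁻¹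
    rw [← hu, u.inv_mul, hω1] at this
    exact one_ne_zero this
end

section
/- Let A be a normal element (A A* = A* A) of a unital C*-algebra 𝔄, and let ω₁ and ω₂ be states on 𝔄 that are eigenstates of A with distinct eigenvalues λ₁ ≠ λ₂. Then ω₁ and ω₂ are orthogonal, i.e., the operator norm of the continuous linear functional ω₁ − ω₂ equals ‖ω₁‖ + ‖ω₂‖ = 2. -/
variable {𝔄 : Type*} [CStarAlgebra 𝔄]

/-! An eigenstate `ω` of `A` with eigenvalue `λ` kills the left ideal generated by `A - λ`.
By normality `ω ((A - λ) (A - λ)⋆) = 0`, so Cauchy–Schwarz makes `ω` kill `b (A - λ)⋆` as well: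
`ω` is also an eigenstate of `A⋆`, with eigenvalue `λ̄`. By Stone–Weierstrass it is then an
eigenstate of every `f(A)`, with eigenvalue `f(λ)`. A continuous `f` with `|f| ≤ 1`,
`f(λ₁) = 1` and `f(λ₂) = -1` gives `‖f(A)‖ ≤ 1` and `(ω₁ - ω₂)(f(A)) = 2`, while states have
norm `1`. -/

open scoped ComplexOrder

-- A C⋆-algebra carries no order instance in Mathlib; `IsState` is positivity for the spectral order.
attribute [local instance] CStarAlgebra.spectralOrder CStarAlgebra.spectralOrderedRing

namespace IsState

variable {ω : 𝔄 →L[ℂ] ℂ}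

lemma map_one {φ : 𝔄 → ℂ} (hφ : IsState φ) : φ 1 = 1 :=
  hφ.2.2.1

noncomputable def toPositiveLinearMap (hω : IsState ⇑ω) : 𝔄 →ₚ[ℂ] ℂ :=
  .mk₀ ω.toLinearMap fun x hx ↦ by
    obtain ⟨b, rfl⟩ := CStarAlgebra.nonneg_iff_eq_star_mul_self.mp hx
    obtain ⟨r, hr, hωb⟩ := hω.2.2.2 b
    simpa [hωb] using hr

@[simp]
lemma toPositiveLinearMap_apply (hω : IsState ⇑ω) (x : 𝔄) : hω.toPositiveLinearMap x = ω x :=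
  rfl

lemma norm_apply_star_mul_sq_le (hω : IsState ⇑ω) (x y : 𝔄) :
    ‖ω (star x * y)‖ ^ 2 ≤ ‖ω (star x * x)‖ * ‖ω (star y * y)‖ := by
  set f := hω.toPositiveLinearMap
  -- Cauchy–Schwarz for the GNS semi-inner product `⟪x, y⟫ = ω (star x * y)`.
  have hnorm (z : 𝔄) : ‖ω (star z * z)‖ = ‖f.toPreGNS z‖ ^ 2 := by
    rw [← toPositiveLinearMap_apply hω, ← f.ofPreGNS_toPreGNS z, ← f.preGNS_norm_sq]
    simp
  rw [hnorm, hnorm, ← mul_pow]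
  gcongr
  exact norm_inner_le_norm (𝕜 := ℂ) (f.toPreGNS x) (f.toPreGNS y)

lemma apply_mul_eq_zero (hω : IsState ⇑ω) {y : 𝔄} (hy : ω (star y * y) = 0) (b : 𝔄) :
    ω (b * y) = 0 := by
  have := hω.norm_apply_star_mul_sq_le (star b) y
  rw [star_star, hy, norm_zero, mul_zero] at this
  exact norm_eq_zero.mp (pow_eq_zero_iff two_ne_zero |>.mp (le_antisymm this (by positivity)))

lemma apply_mul_star_eq_zero (hω : IsState ⇑ω) {y : 𝔄} (hy : ω (y * star y) = 0) (b : 𝔄) :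
    ω (b * star y) = 0 :=
  hω.apply_mul_eq_zero (by rwa [star_star]) b

lemma norm_apply_le (hω : IsState ⇑ω) (a : 𝔄) : ‖ω a‖ ≤ ‖a‖ := by
  have hCS := hω.norm_apply_star_mul_sq_le 1 a
  rw [star_one, one_mul, one_mul, hω.map_one, norm_one, one_mul] at hCS
  have hpos : ‖ω (star a * a)‖ ≤ ‖star a * a‖ := by
    simpa [hω.map_one] using
      hω.toPositiveLinearMap.norm_apply_le_of_nonneg _ (star_mul_self_nonneg a)
  rw [CStarRing.norm_star_mul_self, ← sq] at hpos
  exact (sq_le_sq₀ (norm_nonneg _) (norm_nonneg _)).mp (hCS.trans hpos)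

lemma norm_eq_one (hω : IsState ⇑ω) : ‖ω‖ = 1 := by
  have : Nontrivial 𝔄 := ⟨0, 1, fun h ↦ by simpa [← h] using hω.map_one⟩
  refine le_antisymm (ω.opNorm_le_bound zero_le_one fun a ↦ by simpa using hω.norm_apply_le a) ?_
  simpa [hω.map_one] using ω.le_opNorm 1

end IsState

lemma isStarNormal_algebraMap_sub {R A : Type*} [CommRing R] [StarRing R] [Ring A] [StarRing A]
    [Algebra R A] [StarModule R A] (r : R) (a : A) [ha : IsStarNormal a] :
    IsStarNormal (algebraMap R A r - a) := by
  rw [isStarNormal_iff, commute_iff_eq]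
  simp only [star_sub, ← algebraMap_star_comm, sub_mul, mul_sub, ← map_mul, mul_comm (star r) r,
    Algebra.commutes, ha.star_comm_self.eq]
  abel

lemma isEigenstate_algebraMap {ω : 𝔄 →L[ℂ] ℂ} (c : ℂ) : IsEigenstate ⇑ω (algebraMap ℂ 𝔄 c) c :=
  fun b ↦ by rw [Algebra.algebraMap_eq_smul_one, mul_smul_comm, mul_one, map_smul, smul_eq_mul]

namespace IsEigenstate

lemma mul {φ : 𝔄 → ℂ} {A B : 𝔄} {l m : ℂ} (hA : IsEigenstate φ A l) (hB : IsEigenstate φ B m) :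
    IsEigenstate φ (A * B) (l * m) :=
  fun b ↦ by rw [← mul_assoc, hB, hA]; ring

variable {ω : 𝔄 →L[ℂ] ℂ} {A B : 𝔄} {l m : ℂ}

lemma apply_eq (h : IsEigenstate ⇑ω A l) : ω A = l * ω 1 := by
  simpa using h 1

lemma add (hA : IsEigenstate ⇑ω A l) (hB : IsEigenstate ⇑ω B m) :
    IsEigenstate ⇑ω (A + B) (l + m) :=
  fun b ↦ by rw [mul_add, map_add, hA, hB, add_mul]

lemma isClosed_setOf {X : Type*} [TopologicalSpace X] {F : X → 𝔄} {g : X → ℂ}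
    (hF : Continuous F) (hg : Continuous g) : IsClosed {x | IsEigenstate ⇑ω (F x) (g x)} := by
  simp only [IsEigenstate, Set.ofPred_forall]
  exact isClosed_iInter fun b ↦ isClosed_eq (by fun_prop) (by fun_prop)

lemma apply_mul_algebraMap_sub (h : IsEigenstate ⇑ω A l) (b : 𝔄) :
    ω (b * (algebraMap ℂ 𝔄 l - A)) = 0 := by
  rw [mul_sub, map_sub, isEigenstate_algebraMap l b, h b, sub_self]

lemma mem_spectrum (hω : ω 1 = 1) (h : IsEigenstate ⇑ω A l) : l ∈ spectrum ℂ A := by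
  rintro ⟨u, hu⟩
  simpa [← hu, hω] using h.apply_mul_algebraMap_sub ↑u⁻¹

lemma star (hω : IsState ⇑ω) [IsStarNormal A] (h : IsEigenstate ⇑ω A l) :
    IsEigenstate ⇑ω (star A) (star l) := by
  intro b
  have hker := hω.apply_mul_star_eq_zero (y := algebraMap ℂ 𝔄 l - A) ?_ b
  · rwa [star_sub, ← algebraMap_star_comm, mul_sub, map_sub, isEigenstate_algebraMap,
      sub_eq_zero, eq_comm] at hker
  · rw [← (isStarNormal_algebraMap_sub l A).star_comm_self.eq]
    exact h.apply_mul_algebraMap_sub _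

lemma cfcHom (hω : IsState ⇑ω) [hA : IsStarNormal A] (h : IsEigenstate ⇑ω A l)
    (f : C(spectrum ℂ A, ℂ)) :
    IsEigenstate ⇑ω (_root_.cfcHom hA f) (f ⟨l, h.mem_spectrum hω.map_one⟩) := by
  induction f using ContinuousMap.induction_on_of_compact with
  | const c =>
    change IsEigenstate _ (_root_.cfcHom hA (algebraMap ℂ C(spectrum ℂ A, ℂ) c)) c
    rw [AlgHomClass.commutes]
    exact isEigenstate_algebraMap c
  | id => simpa [cfcHom_id hA] using h
  | star_id => simpa [map_star, cfcHom_id hA] using h.star hω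
  | add f g hf hg => simpa using hf.add hg
  | mul f g hf hg => simpa using hf.mul hg
  | frequently f hf =>
    exact hf.mem_of_closed <| isClosed_setOf (cfcHom_isClosedEmbedding hA).continuous
      (ContinuousEvalConst.continuous_eval_const _)

lemma cfc (hω : IsState ⇑ω) [IsStarNormal A] (h : IsEigenstate ⇑ω A l) (f : ℂ → ℂ)
    (hf : ContinuousOn f (spectrum ℂ A)) : IsEigenstate ⇑ω (_root_.cfc f A) (f l) := by
  rw [cfc_apply f A]
  exact h.cfcHom hω _

end IsEigenstate

lemma exists_continuous_norm_le_one_eq_one_eq_neg_one {X : Type*} [TopologicalSpace X]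
    [NormalSpace X] [T1Space X] {x y : X} (hxy : x ≠ y) :
    ∃ f : X → ℂ, Continuous f ∧ (∀ z, ‖f z‖ ≤ 1) ∧ f x = 1 ∧ f y = -1 := by
  obtain ⟨g, hgx, hgy, hg⟩ := exists_continuous_zero_one_of_isClosed isClosed_singleton
    isClosed_singleton (Set.disjoint_singleton.mpr hxy)
  refine ⟨fun z ↦ ((1 - 2 * g z : ℝ) : ℂ), by fun_prop, fun z ↦ ?_, ?_, ?_⟩
  · obtain ⟨h0, h1⟩ := hg z
    rw [Complex.norm_real, Real.norm_eq_abs, abs_le]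
    constructor <;> linarith
  · simp [hgx rfl]
  · simp [hgy rfl]; norm_num

/-- Two eigenstates of a normal element `A` with distinct eigenvalues are orthogonal:
`‖ω₁ - ω₂‖ = ‖ω₁‖ + ‖ω₂‖ = 2`. -/
theorem eigenstates_orthogonal (A : 𝔄) (hA : A * star A = star A * A)
    (ω₁ ω₂ : 𝔄 →L[ℂ] ℂ) (hs₁ : IsState (⇑ω₁)) (hs₂ : IsState (⇑ω₂)) (l₁ l₂ : ℂ)
    (h₁ : IsEigenstate (⇑ω₁) A l₁) (h₂ : IsEigenstate (⇑ω₂) A l₂) (hne : l₁ ≠ l₂) :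
    ‖ω₁ - ω₂‖ = ‖ω₁‖ + ‖ω₂‖ ∧ ‖ω₁‖ + ‖ω₂‖ = 2 := by
  have : IsStarNormal A := ⟨hA.symm⟩
  obtain ⟨f, hf, hf_le, hf₁, hf₂⟩ := exists_continuous_norm_le_one_eq_one_eq_neg_one hne
  have hx : ‖cfc f A‖ ≤ 1 := norm_cfc_le zero_le_one fun z _ ↦ hf_le z
  have hω₁x : ω₁ (cfc f A) = 1 := by
    simpa [hf₁, hs₁.map_one] using (h₁.cfc hs₁ f hf.continuousOn).apply_eq
  have hω₂x : ω₂ (cfc f A) = -1 := by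
    simpa [hf₂, hs₂.map_one] using (h₂.cfc hs₂ f hf.continuousOn).apply_eq
  have hnorm : ‖ω₁‖ + ‖ω₂‖ = 2 := by rw [hs₁.norm_eq_one, hs₂.norm_eq_one, one_add_one_eq_two]
  refine ⟨(le_antisymm ((norm_sub_le _ _).trans hnorm.le) ?_).trans hnorm.symm, hnorm⟩
  calc (2 : ℝ) = ‖(ω₁ - ω₂) (cfc f A)‖ := by simp [hω₁x, hω₂x]; norm_num
    _ ≤ ‖ω₁ - ω₂‖ * 1 := (ω₁ - ω₂).le_opNorm_of_le hx
    _ = ‖ω₁ - ω₂‖ := mul_one _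
end
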